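/- Let Φ be a real-valued C² function and a a C¹ function on (0,∞). Suppose M, C₁, C₂ > 0 and m ∈ ℝ satisfy |Φ'(λ)| ≥ C₁ M λ|λ²−m| and |Φ''(λ)| ≤ C₂ M(λ²+|m|) for all λ in the support of a. Then there exists C>0 depending only on C₁, C₂ such that |∫₀^∞ a(λ)e^{iΦ(λ)} dλ| ≤ C M^{-1/2}(‖λ^{-1}a‖_∞ + ‖∂_λ a‖_∞), provided the right-hand side is finite. -/

import Mathlib

/-!
Split `(0, ∞)` at the scale `δ = M^{-1/2}`. Where `λ² ≤ δ` or `|λ² - m| ≤ δ` use only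
`|a(λ)| ≤ Aλ`: these sets have `λ²`-length `O(δ)`, so they contribute `O(Aδ)`. On the rest
integrate by parts once with `q = a / (iΦ')`. The boundary terms are `O(A / (C₁Mδ))`, and
`|q'| ≤ (B/C₁ + 3AC₂/C₁²) M⁻¹ (λ⁻³ + λ (λ² - m)⁻²)`, an exact derivative whose integral over
a piece where `λ² ≥ δ` and `λ² - m` keeps a sign with `|λ² - m| ≥ δ` is at most `δ⁻¹` times
its coefficient. Since `Mδ² = 1`, every contribution is `O(δ (A + B))`.
-/

open Set MeasureTheory Filter Topology Complex Function

theorem norm_intervalIntegral_mul_deriv_cexp_le {q : ℝ → ℂ} {Φ φ H : ℝ → ℝ} {x y : ℝ}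
    (hxy : x ≤ y) (hq : ∀ l ∈ Icc x y, DifferentiableAt ℝ q l)
    (hΦ : ∀ l ∈ Icc x y, HasDerivAt Φ (φ l) l) (hφ : ContinuousOn φ (Icc x y))
    (hq' : ∀ l ∈ Icc x y, ‖deriv q l‖ ≤ H l) (hH : IntervalIntegrable H volume x y) :
    ‖∫ l in x..y, q l * (I * φ l * exp (I * Φ l))‖ ≤ ‖q x‖ + ‖q y‖ + ∫ l in x..y, H l := by
  have hnorm (t : ℝ) : ‖exp (I * t)‖ = 1 := by rw [mul_comm, norm_exp_ofReal_mul_I]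
  have hv : ∀ l ∈ uIcc x y,
      HasDerivAt (fun t => exp (I * Φ t)) (I * φ l * exp (I * Φ l)) l := by
    intro l hl
    rw [uIcc_of_le hxy] at hl
    simpa [mul_comm] using (((hΦ l hl).ofReal_comp).const_mul I).cexp
  have hΦc : ContinuousOn Φ (Icc x y) := fun l hl => (hΦ l hl).continuousAt.continuousWithinAt
  have hv' : IntervalIntegrable (fun l => I * φ l * exp (I * Φ l)) volume x y := by
    refine ContinuousOn.intervalIntegrable ?_
    rw [uIcc_of_le hxy]
    fun_prop
  have hqd : IntervalIntegrable (deriv q) volume x y := by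
    refine hH.mono_fun' (measurable_deriv q).aestronglyMeasurable ?_
    rw [EventuallyLE, uIoc_of_le hxy]
    exact (ae_restrict_iff' measurableSet_Ioc).2 <| .of_forall fun l hl =>
      hq' l (Ioc_subset_Icc_self hl)
  rw [intervalIntegral.integral_mul_deriv_eq_deriv_mul
    (fun l hl => (hq l (by rwa [uIcc_of_le hxy] at hl)).hasDerivAt) hv hqd hv']
  calc _ ≤ ‖q y * exp (I * Φ y)‖ + ‖q x * exp (I * Φ x)‖
        + ‖∫ l in x..y, deriv q l * exp (I * Φ l)‖ := norm_sub_le_of_le (norm_sub_le _ _) le_rfl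
    _ ≤ ‖q x‖ + ‖q y‖ + ∫ l in x..y, H l := by
      simp only [norm_mul, hnorm, mul_one]
      rw [add_comm ‖q y‖]
      gcongr
      refine intervalIntegral.norm_integral_le_of_norm_le hxy (.of_forall fun l hl => ?_) hH
      rw [norm_mul, hnorm, mul_one]
      exact hq' l (Ioc_subset_Icc_self hl)

theorem norm_integral_Ioi_le_of_norm_intervalIntegral_le {E : Type*} [NormedAddCommGroup E]
    [NormedSpace ℝ E] {f : ℝ → E} {t ε : ℝ} (hf : IntegrableOn f (Ioi t))
    (h : ∀ y, t ≤ y → ‖∫ l in t..y, f l‖ ≤ ε) : ‖∫ l in Ioi t, f l‖ ≤ ε :=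
  le_of_tendsto (intervalIntegral_tendsto_integral_Ioi t hf tendsto_id).norm
    (eventually_ge_atTop t |>.mono h)

theorem norm_intervalIntegral_le_of_norm_le_mul {E : Type*} [NormedAddCommGroup E]
    [NormedSpace ℝ E] {f : ℝ → E} {A x y : ℝ} (hxy : x ≤ y)
    (h : ∀ l ∈ Ioc x y, ‖f l‖ ≤ A * l) : ‖∫ l in x..y, f l‖ ≤ A * ((y ^ 2 - x ^ 2) / 2) := by
  calc ‖∫ l in x..y, f l‖ ≤ ∫ l in x..y, A * l :=
        intervalIntegral.norm_integral_le_of_norm_le hxy (.of_forall h)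
          ((continuous_const.mul continuous_id).intervalIntegrable _ _)
    _ = A * ((y ^ 2 - x ^ 2) / 2) := by rw [intervalIntegral.integral_const_mul, integral_id]

theorem norm_integral_Ioi_le_of_three_cuts {E : Type*} [NormedAddCommGroup E]
    [NormedSpace ℝ E] {f : ℝ → E} {r s t : ℝ} (hf : IntegrableOn f (Ioi 0)) (hr : 0 ≤ r)
    (hrs : r ≤ s) (hst : s ≤ t) :
    ‖∫ l in Ioi 0, f l‖ ≤ ‖∫ l in 0..r, f l‖ + ‖∫ l in r..s, f l‖ + ‖∫ l in s..t, f l‖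
      + ‖∫ l in Ioi t, f l‖ := by
  have hf' (c : ℝ) (hc : 0 ≤ c) := hf.mono_set (Ioi_subset_Ioi hc)
  rw [← intervalIntegral.integral_interval_add_Ioi hf (hf' r hr),
    ← intervalIntegral.integral_interval_add_Ioi (hf' r hr) (hf' s (hr.trans hrs)),
    ← intervalIntegral.integral_interval_add_Ioi (hf' s (hr.trans hrs))
      (hf' t (hr.trans (hrs.trans hst)))]
  refine (norm_add_le _ _).trans ?_
  rw [add_assoc, add_assoc]
  gcongr
  exact (norm_add_le _ _).trans (add_le_add le_rfl (norm_add_le _ _))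

theorem le_abs_sq_sub_of_mem_Icc {m δ x y l : ℝ} (hx : 0 < x)
    (hsep : m + δ ≤ x ^ 2 ∨ y ^ 2 ≤ m - δ) (hl : l ∈ Icc x y) : δ ≤ |l ^ 2 - m| := by
  have hxl : x ^ 2 ≤ l ^ 2 := pow_le_pow_left₀ hx.le hl.1 2
  have hly : l ^ 2 ≤ y ^ 2 := pow_le_pow_left₀ (hx.le.trans hl.1) hl.2 2
  rcases hsep with h | h
  · exact le_abs.2 (Or.inl (by linarith))
  · exact le_abs.2 (Or.inr (by linarith))

theorem intervalIntegrable_inv_pow_three_add_div_sq {m x y : ℝ} (hx : 0 < x) (hxy : x ≤ y)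
    (hm : ∀ l ∈ Icc x y, l ^ 2 ≠ m) :
    IntervalIntegrable (fun l => 1 / l ^ 3 + l / (l ^ 2 - m) ^ 2) volume x y := by
  refine ContinuousOn.intervalIntegrable fun l hl => ContinuousAt.continuousWithinAt ?_
  rw [uIcc_of_le hxy] at hl
  have : l ^ 3 ≠ 0 := pow_ne_zero _ (hx.trans_le hl.1).ne'
  have : (l ^ 2 - m) ^ 2 ≠ 0 := pow_ne_zero _ (sub_ne_zero.2 (hm l hl))
  fun_prop (disch := assumption)

theorem intervalIntegral_inv_pow_three_add_div_sq_le {m δ x y : ℝ} (hδ : 0 < δ) (hx : 0 < x)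
    (hxy : x ≤ y) (hxδ : δ ≤ x ^ 2) (hsep : m + δ ≤ x ^ 2 ∨ y ^ 2 ≤ m - δ) :
    ∫ l in x..y, (1 / l ^ 3 + l / (l ^ 2 - m) ^ 2) ≤ 1 / δ := by
  have hm : ∀ l ∈ Icc x y, l ^ 2 ≠ m := fun l hl h =>
    hδ.not_ge (by simpa [h] using le_abs_sq_sub_of_mem_Icc hx hsep hl)
  have hderiv : ∀ l ∈ uIcc x y,
      HasDerivAt (fun t => -(1 / 2) * (t ^ 2)⁻¹ - 1 / 2 * (t ^ 2 - m)⁻¹)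
        (1 / l ^ 3 + l / (l ^ 2 - m) ^ 2) l := by
    intro l hl
    rw [uIcc_of_le hxy] at hl
    have hl0 : l ≠ 0 := (hx.trans_le hl.1).ne'
    have hsq : HasDerivAt (fun t : ℝ => t ^ 2) (2 * l) l := by simpa using hasDerivAt_pow 2 l
    refine ((hsq.inv (by positivity)).const_mul (-(1 / 2) : ℝ)).sub
      (((hsq.sub_const m).inv (sub_ne_zero.2 (hm l hl))).const_mul (1 / 2 : ℝ)) |>.congr_deriv ?_
    field_simp
    ring
  rw [intervalIntegral.integral_eq_sub_of_hasDerivAt hderiv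
    (intervalIntegrable_inv_pow_three_add_div_sq hx hxy hm), one_div δ]
  have h1 : (x ^ 2)⁻¹ ≤ δ⁻¹ := inv_anti₀ hδ hxδ
  have h2 : 0 ≤ (y ^ 2)⁻¹ := by positivity
  rcases hsep with h | h
  · have h3 : (x ^ 2 - m)⁻¹ ≤ δ⁻¹ := inv_anti₀ hδ (by linarith)
    have h4 : 0 ≤ (y ^ 2 - m)⁻¹ := inv_nonneg.2 (by nlinarith)
    linarith
  · have h3 : (x ^ 2 - m)⁻¹ ≤ 0 := inv_nonpos.2 (by nlinarith)
    have h4 : -(y ^ 2 - m)⁻¹ ≤ δ⁻¹ := by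
      rw [← inv_neg, neg_sub]; exact inv_anti₀ hδ (by linarith)
    linarith

theorem one_div_mul_abs_le_inv_pow_three_add_div_sq {l w : ℝ} (hl : 0 < l) (hw : w ≠ 0) :
    1 / (l * |w|) ≤ 1 / l ^ 3 + l / w ^ 2 := by
  have hw' : 0 < |w| := abs_pos.2 hw
  rw [← sq_abs w, div_add_div _ _ (by positivity) (by positivity),
    div_le_div_iff₀ (by positivity) (by positivity)]
  nlinarith [sq_nonneg (|w| - l ^ 2), pow_pos hl 3, pow_pos hw' 3, mul_pos hl hw']

theorem sq_add_abs_div_le_inv_pow_three_add_div_sq {l m : ℝ} (hl : 0 < l) (hm : l ^ 2 ≠ m) :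
    (l ^ 2 + |m|) / (l * (l ^ 2 - m) ^ 2) ≤ 3 * (1 / l ^ 3 + l / (l ^ 2 - m) ^ 2) := by
  have hw : l ^ 2 - m ≠ 0 := sub_ne_zero.2 hm
  have hm' : |m| ≤ l ^ 2 + |l ^ 2 - m| := by
    have := abs_sub (l ^ 2) (l ^ 2 - m)
    rwa [sub_sub_cancel, abs_of_nonneg (sq_nonneg l)] at this
  calc (l ^ 2 + |m|) / (l * (l ^ 2 - m) ^ 2)
      ≤ (2 * l ^ 2 + |l ^ 2 - m|) / (l * (l ^ 2 - m) ^ 2) := by gcongr ?_ / _; linarith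
    _ = 2 * (l / (l ^ 2 - m) ^ 2) + 1 / (l * |l ^ 2 - m|) := by
      rw [← sq_abs (l ^ 2 - m)]
      have : |l ^ 2 - m| ≠ 0 := abs_ne_zero.2 hw
      field_simp
    _ ≤ 2 * (l / (l ^ 2 - m) ^ 2) + (1 / l ^ 3 + l / (l ^ 2 - m) ^ 2) := by
      gcongr; exact one_div_mul_abs_le_inv_pow_three_add_div_sq hl hw
    _ ≤ 3 * (1 / l ^ 3 + l / (l ^ 2 - m) ^ 2) := by
      have : 0 ≤ 1 / l ^ 3 := by positivity
      linarith

theorem div_add_mul_div_sq_le_mul_inv_pow_three_add_div_sq {C₁ C₂ M m A B l : ℝ}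
    (hC₁ : 0 < C₁) (hC₂ : 0 ≤ C₂) (hM : 0 < M) (hA : 0 ≤ A) (hB : 0 ≤ B) (hl : 0 < l)
    (hm : l ^ 2 ≠ m) :
    B / (C₁ * M * l * |l ^ 2 - m|)
        + A * l * (C₂ * M * (l ^ 2 + |m|)) / (C₁ * M * l * |l ^ 2 - m|) ^ 2
      ≤ (B / C₁ + 3 * A * C₂ / C₁ ^ 2) / M * (1 / l ^ 3 + l / (l ^ 2 - m) ^ 2) := by
  have hw : |l ^ 2 - m| ≠ 0 := abs_ne_zero.2 (sub_ne_zero.2 hm)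
  have e1 : B / (C₁ * M * l * |l ^ 2 - m|) = B / (C₁ * M) * (1 / (l * |l ^ 2 - m|)) := by
    field_simp
  have e2 : A * l * (C₂ * M * (l ^ 2 + |m|)) / (C₁ * M * l * |l ^ 2 - m|) ^ 2
      = A * C₂ / (C₁ ^ 2 * M) * ((l ^ 2 + |m|) / (l * (l ^ 2 - m) ^ 2)) := by
    rw [← sq_abs (l ^ 2 - m)]
    field_simp
  rw [e1, e2]
  calc _ ≤ B / (C₁ * M) * (1 / l ^ 3 + l / (l ^ 2 - m) ^ 2)
        + A * C₂ / (C₁ ^ 2 * M) * (3 * (1 / l ^ 3 + l / (l ^ 2 - m) ^ 2)) := by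
        gcongr
        · exact one_div_mul_abs_le_inv_pow_three_add_div_sq hl (sub_ne_zero.2 hm)
        · exact sq_add_abs_div_le_inv_pow_three_add_div_sq hl hm
    _ = _ := by field_simp

structure StationaryPhaseBounds (Φ : ℝ → ℝ) (a : ℝ → ℂ) (C₁ C₂ M m A B : ℝ) : Prop where
  contDiffOn_phase : ContDiffOn ℝ 2 Φ (Ioi 0)
  contDiffOn_amplitude : ContDiffOn ℝ 1 a (Ioi 0)
  le_abs_deriv_phase : ∀ l ∈ support a, 0 < l → C₁ * M * l * |l ^ 2 - m| ≤ |deriv Φ l|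
  abs_deriv_deriv_phase_le :
    ∀ l ∈ support a, 0 < l → |deriv (deriv Φ) l| ≤ C₂ * M * (l ^ 2 + |m|)
  norm_amplitude_div_le : ∀ l ∈ Ioi (0 : ℝ), ‖a l‖ / l ≤ A
  norm_deriv_amplitude_le : ∀ l ∈ Ioi (0 : ℝ), ‖deriv a l‖ ≤ B

noncomputable def phaseQuotient (Φ : ℝ → ℝ) (a : ℝ → ℂ) (l : ℝ) : ℂ := a l / (I * deriv Φ l)

namespace StationaryPhaseBounds

variable {Φ : ℝ → ℝ} {a : ℝ → ℂ} {C₁ C₂ M m A B l : ℝ}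

theorem hasDerivAt_phase (h : StationaryPhaseBounds Φ a C₁ C₂ M m A B) (hl : 0 < l) :
    HasDerivAt Φ (deriv Φ l) l :=
  (h.contDiffOn_phase.differentiableOn two_ne_zero l hl).differentiableAt
    (Ioi_mem_nhds hl) |>.hasDerivAt

theorem contDiffOn_deriv_phase (h : StationaryPhaseBounds Φ a C₁ C₂ M m A B) :
    ContDiffOn ℝ 1 (deriv Φ) (Ioi 0) :=
  h.contDiffOn_phase.deriv_of_isOpen isOpen_Ioi (by norm_num)

theorem hasDerivAt_deriv_phase (h : StationaryPhaseBounds Φ a C₁ C₂ M m A B) (hl : 0 < l) :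
    HasDerivAt (deriv Φ) (deriv (deriv Φ) l) l :=
  (h.contDiffOn_deriv_phase.differentiableOn one_ne_zero l hl).differentiableAt
    (Ioi_mem_nhds hl) |>.hasDerivAt

theorem hasDerivAt_amplitude (h : StationaryPhaseBounds Φ a C₁ C₂ M m A B) (hl : 0 < l) :
    HasDerivAt a (deriv a l) l :=
  (h.contDiffOn_amplitude.differentiableOn one_ne_zero l hl).differentiableAt
    (Ioi_mem_nhds hl) |>.hasDerivAt

theorem norm_amplitude_le (h : StationaryPhaseBounds Φ a C₁ C₂ M m A B) (hl : 0 < l) :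
    ‖a l‖ ≤ A * l :=
  (div_le_iff₀ hl).1 (h.norm_amplitude_div_le l hl)

theorem A_nonneg (h : StationaryPhaseBounds Φ a C₁ C₂ M m A B) : 0 ≤ A :=
  (div_nonneg (norm_nonneg _) zero_le_one).trans
    (h.norm_amplitude_div_le 1 (mem_Ioi.2 one_pos))

theorem B_nonneg (h : StationaryPhaseBounds Φ a C₁ C₂ M m A B) : 0 ≤ B :=
  (norm_nonneg _).trans (h.norm_deriv_amplitude_le 1 (mem_Ioi.2 one_pos))

theorem norm_amplitude_mul_cexp_le (h : StationaryPhaseBounds Φ a C₁ C₂ M m A B) (hl : 0 < l) :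
    ‖a l * exp (I * Φ l)‖ ≤ A * l := by
  rw [norm_mul, mul_comm I, norm_exp_ofReal_mul_I, mul_one]
  exact h.norm_amplitude_le hl

theorem le_abs_deriv_phase_of_mem_tsupport (h : StationaryPhaseBounds Φ a C₁ C₂ M m A B)
    (hl : 0 < l) (hcl : l ∈ tsupport a) :
    C₁ * M * l * |l ^ 2 - m| ≤ |deriv Φ l| := by
  have hcl' : l ∈ closure (support a ∩ Ioi 0) := by
    rw [inter_comm]; exact isOpen_Ioi.inter_closure ⟨hl, hcl⟩
  exact ContinuousWithinAt.closure_le hcl' (by fun_prop)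
    (h.hasDerivAt_deriv_phase hl).continuousAt.abs.continuousWithinAt
    fun t ht => h.le_abs_deriv_phase t ht.1 ht.2

theorem deriv_phase_ne_zero (h : StationaryPhaseBounds Φ a C₁ C₂ M m A B) (hC₁ : 0 < C₁)
    (hM : 0 < M) (hl : 0 < l) (hm : l ^ 2 ≠ m) (hcl : l ∈ tsupport a) :
    deriv Φ l ≠ 0 := by
  have hw : 0 < |l ^ 2 - m| := abs_pos.2 (sub_ne_zero.2 hm)
  exact abs_pos.1 <| (by positivity : 0 < C₁ * M * l * |l ^ 2 - m|).trans_le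
    (h.le_abs_deriv_phase_of_mem_tsupport hl hcl)

theorem phaseQuotient_mul (h : StationaryPhaseBounds Φ a C₁ C₂ M m A B) (hC₁ : 0 < C₁)
    (hM : 0 < M) (hl : 0 < l) (hm : l ^ 2 ≠ m) :
    phaseQuotient Φ a l * (I * deriv Φ l) = a l := by
  by_cases ha : a l = 0
  · simp [phaseQuotient, ha]
  · have := h.deriv_phase_ne_zero hC₁ hM hl hm (subset_tsupport a ha)
    exact div_mul_cancel₀ _ (by simpa using this)

theorem norm_phaseQuotient_le (h : StationaryPhaseBounds Φ a C₁ C₂ M m A B) (hC₁ : 0 < C₁)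
    (hM : 0 < M) (hl : 0 < l) (hm : l ^ 2 ≠ m) :
    ‖phaseQuotient Φ a l‖ ≤ A / (C₁ * M * |l ^ 2 - m|) := by
  have hw : 0 < |l ^ 2 - m| := abs_pos.2 (sub_ne_zero.2 hm)
  by_cases ha : a l = 0
  · simp only [phaseQuotient, ha, zero_div, norm_zero]
    have := h.A_nonneg
    positivity
  · have hΦ' := h.le_abs_deriv_phase l ha hl
    rw [phaseQuotient, norm_div, norm_mul, norm_I, one_mul, norm_real, Real.norm_eq_abs]
    calc ‖a l‖ / |deriv Φ l| ≤ A * l / (C₁ * M * l * |l ^ 2 - m|) :=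
          div_le_div₀ (by have := h.A_nonneg; positivity) (h.norm_amplitude_le hl)
            (by positivity) hΦ'
      _ = A / (C₁ * M * |l ^ 2 - m|) := by field_simp

theorem differentiableAt_phaseQuotient_and_norm_deriv_le
    (h : StationaryPhaseBounds Φ a C₁ C₂ M m A B) (hC₁ : 0 < C₁) (hC₂ : 0 ≤ C₂) (hM : 0 < M)
    (hl : 0 < l) (hm : l ^ 2 ≠ m) :
    DifferentiableAt ℝ (phaseQuotient Φ a) l ∧ ‖deriv (phaseQuotient Φ a) l‖
      ≤ (B / C₁ + 3 * A * C₂ / C₁ ^ 2) / M * (1 / l ^ 3 + l / (l ^ 2 - m) ^ 2) := by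
  have hA := h.A_nonneg
  have hB := h.B_nonneg
  -- Off `tsupport a` the quotient vanishes near `l`; on it, the lower bound on `|Φ'|` survives
  -- by continuity, so the quotient rule applies.
  by_cases hcl : l ∈ tsupport a
  · have hρ := h.le_abs_deriv_phase_of_mem_tsupport hl hcl
    have hw : 0 < |l ^ 2 - m| := abs_pos.2 (sub_ne_zero.2 hm)
    have hρ0 : 0 < C₁ * M * l * |l ^ 2 - m| := by positivity
    have hne : (I * deriv Φ l : ℂ) ≠ 0 := by
      simpa using h.deriv_phase_ne_zero hC₁ hM hl hm hcl
    have hD : HasDerivAt (phaseQuotient Φ a) _ l := (h.hasDerivAt_amplitude hl).div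
      (((h.hasDerivAt_deriv_phase hl).ofReal_comp).const_mul I) hne
    refine ⟨hD.differentiableAt, ?_⟩
    have hσ : ‖a l‖ * |deriv (deriv Φ) l| ≤ A * l * (C₂ * M * (l ^ 2 + |m|)) := by
      by_cases ha : a l = 0
      · rw [ha, norm_zero, zero_mul]; positivity
      · exact mul_le_mul (h.norm_amplitude_le hl) (h.abs_deriv_deriv_phase_le l ha hl)
          (abs_nonneg _) (by positivity)
    rw [hD.deriv]
    refine le_trans ?_
      (div_add_mul_div_sq_le_mul_inv_pow_three_add_div_sq hC₁ hC₂ hM hA hB hl hm)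
    calc _ ≤ (‖deriv a l‖ * |deriv Φ l| + ‖a l‖ * |deriv (deriv Φ) l|) / |deriv Φ l| ^ 2 := by
          rw [norm_div, norm_pow, norm_mul, norm_I, one_mul, norm_real, Real.norm_eq_abs]
          gcongr
          refine (norm_sub_le _ _).trans_eq ?_
          simp only [norm_mul, norm_I, one_mul, norm_real, Real.norm_eq_abs]
      _ = ‖deriv a l‖ / |deriv Φ l| + ‖a l‖ * |deriv (deriv Φ) l| / |deriv Φ l| ^ 2 := by
          have : |deriv Φ l| ≠ 0 := (hρ0.trans_le hρ).ne'
          field_simp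
      _ ≤ _ := by gcongr; exact h.norm_deriv_amplitude_le l hl
  · have hq : phaseQuotient Φ a =ᶠ[𝓝 l] 0 := by
      filter_upwards [notMem_tsupport_iff_eventuallyEq.1 hcl] with t ht
      simp [phaseQuotient, ht]
    have hD := (hasDerivAt_const l (0 : ℂ)).congr_of_eventuallyEq hq
    refine ⟨hD.differentiableAt, ?_⟩
    rw [hD.deriv, norm_zero]
    positivity

theorem norm_intervalIntegral_le_of_separated (h : StationaryPhaseBounds Φ a C₁ C₂ M m A B)
    (hC₁ : 0 < C₁) (hC₂ : 0 ≤ C₂) (hM : 0 < M) {δ x y : ℝ} (hδ : 0 < δ) (hx : 0 < x)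
    (hxy : x ≤ y) (hxδ : δ ≤ x ^ 2) (hsep : m + δ ≤ x ^ 2 ∨ y ^ 2 ≤ m - δ) :
    ‖∫ l in x..y, a l * exp (I * Φ l)‖
      ≤ (2 * A / C₁ + (B / C₁ + 3 * A * C₂ / C₁ ^ 2)) / (M * δ) := by
  have hA := h.A_nonneg
  have hsepl : ∀ l ∈ Icc x y, 0 < l ∧ δ ≤ |l ^ 2 - m| := fun l hl =>
    ⟨hx.trans_le hl.1, le_abs_sq_sub_of_mem_Icc hx hsep hl⟩
  have hm : ∀ l ∈ Icc x y, l ^ 2 ≠ m := fun l hl h' =>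
    hδ.not_ge (by simpa [h'] using (hsepl l hl).2)
  have hq := fun l hl => h.differentiableAt_phaseQuotient_and_norm_deriv_le hC₁ hC₂ hM
    (hsepl l hl).1 (hm l hl)
  have hqend : ∀ l ∈ Icc x y, ‖phaseQuotient Φ a l‖ ≤ A / (C₁ * M * δ) := fun l hl =>
    (h.norm_phaseQuotient_le hC₁ hM (hsepl l hl).1 (hm l hl)).trans
      (by have := hsepl l hl; gcongr; exact this.2)
  have hIBP := norm_intervalIntegral_mul_deriv_cexp_le hxy (fun l hl => (hq l hl).1)
    (fun l hl => h.hasDerivAt_phase (hsepl l hl).1)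
    (h.contDiffOn_deriv_phase.continuousOn.mono fun l hl => (hsepl l hl).1)
    (fun l hl => (hq l hl).2)
    ((intervalIntegrable_inv_pow_three_add_div_sq hx hxy hm).const_mul _)
  rw [intervalIntegral.integral_const_mul] at hIBP
  have hparts : ∫ l in x..y, a l * exp (I * Φ l)
      = ∫ l in x..y, phaseQuotient Φ a l * (I * deriv Φ l * exp (I * Φ l)) := by
    refine intervalIntegral.integral_congr fun l hl => ?_
    rw [uIcc_of_le hxy] at hl
    rw [← mul_assoc, h.phaseQuotient_mul hC₁ hM (hsepl l hl).1 (hm l hl)]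
  rw [hparts]
  refine hIBP.trans ?_
  have hx' := hqend x (left_mem_Icc.2 hxy)
  have hy' := hqend y (right_mem_Icc.2 hxy)
  have hE := intervalIntegral_inv_pow_three_add_div_sq_le hδ hx hxy hxδ hsep
  have hB := h.B_nonneg
  calc _ ≤ A / (C₁ * M * δ) + A / (C₁ * M * δ)
          + (B / C₁ + 3 * A * C₂ / C₁ ^ 2) / M * (1 / δ) := by gcongr
    _ = _ := by field_simp; ring

theorem norm_integral_le (h : StationaryPhaseBounds Φ a C₁ C₂ M m A B) (hC₁ : 0 < C₁)
    (hC₂ : 0 ≤ C₂) (hM : 0 < M) {δ : ℝ} (hδ : 0 < δ)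
    (hf : IntegrableOn (fun l => a l * exp (I * Φ l)) (Ioi 0)) :
    ‖∫ l in Ioi (0 : ℝ), a l * exp (I * Φ l)‖
      ≤ 3 / 2 * A * δ + 2 * ((2 * A / C₁ + (B / C₁ + 3 * A * C₂ / C₁ ^ 2)) / (M * δ)) := by
  have hA := h.A_nonneg
  have hB := h.B_nonneg
  set F := (2 * A / C₁ + (B / C₁ + 3 * A * C₂ / C₁ ^ 2)) / (M * δ)
  -- `(0, r]` and `[s, t]` are where `l² ≤ δ` or `|l² - m| ≤ δ` can hold
  set r := √δ
  set s := √(max (m - δ) δ)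
  set t := √(max (m + δ) δ)
  have hr : r ^ 2 = δ := Real.sq_sqrt hδ.le
  have hs : s ^ 2 = max (m - δ) δ := Real.sq_sqrt (hδ.le.trans (le_max_right _ _))
  have ht : t ^ 2 = max (m + δ) δ := Real.sq_sqrt (hδ.le.trans (le_max_right _ _))
  have hr0 : 0 < r := Real.sqrt_pos.2 hδ
  have hrs : r ≤ s := Real.sqrt_le_sqrt (le_max_right _ _)
  have hst : s ≤ t := Real.sqrt_le_sqrt (max_le_max_right _ (by linarith))
  have hnear₁ : ‖∫ l in (0 : ℝ)..r, a l * exp (I * Φ l)‖ ≤ A * (δ / 2) := by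
    simpa [hr] using norm_intervalIntegral_le_of_norm_le_mul hr0.le
      fun l hl => h.norm_amplitude_mul_cexp_le hl.1
  have hfar₁ : ‖∫ l in r..s, a l * exp (I * Φ l)‖ ≤ F := by
    rcases le_total (m - δ) δ with hmδ | hmδ
    · rw [show s = r by simp only [s, r, max_eq_right hmδ], intervalIntegral.integral_same,
        norm_zero]
      positivity
    · exact h.norm_intervalIntegral_le_of_separated hC₁ hC₂ hM hδ hr0 hrs hr.ge
        (Or.inr (by rw [hs, max_eq_left hmδ]))
  have hnear₂ : ‖∫ l in s..t, a l * exp (I * Φ l)‖ ≤ A * δ := by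
    refine (norm_intervalIntegral_le_of_norm_le_mul hst
      fun l hl => h.norm_amplitude_mul_cexp_le (hr0.trans_le hrs |>.trans hl.1)).trans ?_
    have : max (m + δ) δ ≤ max (m - δ) δ + 2 * δ :=
      max_le (by linarith [le_max_left (m - δ) δ]) (by linarith [le_max_right (m - δ) δ])
    exact mul_le_mul_of_nonneg_left (by rw [hs, ht]; linarith) hA
  have hfar₂ : ‖∫ l in Ioi t, a l * exp (I * Φ l)‖ ≤ F :=
    norm_integral_Ioi_le_of_norm_intervalIntegral_le
      (hf.mono_set (Ioi_subset_Ioi (hr0.le.trans (hrs.trans hst))))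
      fun y hy => h.norm_intervalIntegral_le_of_separated hC₁ hC₂ hM hδ
        (hr0.trans_le (hrs.trans hst)) hy (ht ▸ le_max_right _ _) (Or.inl (ht ▸ le_max_left _ _))
  calc _ ≤ A * (δ / 2) + F + A * δ + F := by
        refine (norm_integral_Ioi_le_of_three_cuts hf hr0.le hrs hst).trans ?_
        gcongr
    _ = _ := by ring

end StationaryPhaseBounds

/-- Quantitative degenerate stationary phase with vanishing amplitude:
if `|Φ'(λ)| ≥ C₁ M λ|λ² - m|` and `|Φ''(λ)| ≤ C₂ M (λ² + |m|)` on the support of `a`,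
then `|∫₀^∞ a e^{iΦ}| ≤ C M^{-1/2} (‖λ⁻¹ a‖_∞ + ‖∂_λ a‖_∞)` with `C` depending only on
`C₁, C₂`. -/
theorem quantitative_degenerate_stationary_phase (C₁ C₂ : ℝ) (hC₁ : 0 < C₁) (hC₂ : 0 < C₂) :
    ∃ C > (0:ℝ), ∀ (Φ : ℝ → ℝ) (a : ℝ → ℂ),
      ContDiffOn ℝ 2 Φ (Ioi 0) → ContDiffOn ℝ 1 a (Ioi 0) →
      ∀ (M : ℝ) (m : ℝ), 0 < M →
      (∀ l ∈ Function.support a, 0 < l → C₁ * M * l * |l^2 - m| ≤ |deriv Φ l|) →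
      (∀ l ∈ Function.support a, 0 < l → |deriv (deriv Φ) l| ≤ C₂ * M * (l^2 + |m|)) →
      ∀ A B : ℝ, (∀ l ∈ Ioi (0:ℝ), ‖a l‖ / l ≤ A) →
        (∀ l ∈ Ioi (0:ℝ), ‖deriv a l‖ ≤ B) →
      ‖∫ l in Ioi (0:ℝ), a l * Complex.exp (Complex.I * (Φ l : ℂ))‖
        ≤ C * M ^ (-(1:ℝ)/2) * (A + B) := by
  refine ⟨2 + 4 / C₁ + 6 * C₂ / C₁ ^ 2, by positivity, ?_⟩
  intro Φ a hΦ ha M m hM hlow hupp A B hA hB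
  have h : StationaryPhaseBounds Φ a C₁ C₂ M m A B := ⟨hΦ, ha, hlow, hupp, hA, hB⟩
  have hA0 := h.A_nonneg
  have hB0 := h.B_nonneg
  set δ := M ^ (-(1 : ℝ) / 2)
  have hδ : 0 < δ := by positivity
  have hMδ : M * δ = δ⁻¹ := by
    rw [← Real.rpow_neg hM.le, ← Real.rpow_one_add' hM.le (by norm_num)]
    norm_num
  by_cases hf : IntegrableOn (fun l => a l * exp (I * Φ l)) (Ioi 0)
  · refine (h.norm_integral_le hC₁ hC₂.le hM hδ hf).trans ?_
    rw [hMδ, ← sub_nonneg]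
    have : (2 + 4 / C₁ + 6 * C₂ / C₁ ^ 2) * δ * (A + B)
        - (3 / 2 * A * δ + 2 * ((2 * A / C₁ + (B / C₁ + 3 * A * C₂ / C₁ ^ 2)) / δ⁻¹))
        = δ * (A / 2 + 2 * B + 2 * B / C₁ + 6 * B * C₂ / C₁ ^ 2) := by
      field_simp
      ring
    rw [this]
    positivity
  · rw [integral_undef hf, norm_zero]
    positivity
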